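/- Let I ⊂ ℝ be an open interval of length less than π, let γ : I → ℝ and α : I → ℝ_{>0} be locally bounded, and let φ be holomorphic on the open sector S = {r e^{iθ} : r > 0, θ ∈ I}. Assume: (a) |φ(r e^{iθ})| ≤ α(θ) e^{(γ(θ)+ε) r} for every ε > 0, r > 0, θ ∈ I; (b) φ is integrable near the origin along each ray of S; (c) t·φ(t) → 0 as t → 0 within every closed subsector of S. Then for any θ₁, θ₂ ∈ I and any ρ ∈ ℂ with Re(ρ e^{iθ₁}) > γ(θ₁) and Re(ρ e^{iθ₂}) > γ(θ₂), the improper ray integrals coincide: ∫_0^{e^{iθ₁}∞} φ(t) e^{−ρt} dt = ∫_0^{e^{iθ₂}∞} φ(t) e^{−ρt} dt; in other words, the Laplace transform along directions in I is independent of the chosen direction on the common domain. -/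

import Mathlib

open Filter MeasureTheory Set
open scoped Topology Real

/-- The point `r e^{iθ}` of the ray of direction `θ`. -/
noncomputable def rayPt (θ r : ℝ) : ℂ := (r : ℂ) * Complex.exp ((θ : ℂ) * Complex.I)

/-- The unit direction `e^{iθ}`. -/
noncomputable def rayDir (θ : ℝ) : ℂ := Complex.exp ((θ : ℂ) * Complex.I)

/-- The open sector of directions in the open interval `(a, b)`. -/
def sectorIoo (a b : ℝ) : Set ℂ :=
  {t : ℂ | ∃ r θ : ℝ, 0 < r ∧ θ ∈ Set.Ioo a b ∧ t = (r : ℂ) * Complex.exp ((θ : ℂ) * Complex.I)}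

/-- The closed subsector of directions in the closed interval `[a', b']`. -/
def sectorIcc (a' b' : ℝ) : Set ℂ :=
  {t : ℂ | ∃ r θ : ℝ, 0 < r ∧ θ ∈ Set.Icc a' b' ∧ t = (r : ℂ) * Complex.exp ((θ : ℂ) * Complex.I)}

/-!
Substituting `t = e^z` turns the sector into the strip `a < Im z < b` and the Laplace integral
along the direction `θ` into the integral of `F z = φ (e^z) e^{-ρ e^z} e^z` over the line
`Im z = θ`. If `‖φ t‖ ≤ A e^{B |t|}` on the closed subsector between `θ₁` and `θ₂` and
`Re (ρ e^{iθ}) > B` for all `θ ∈ [θ₁, θ₂]`, Cauchy's theorem on the rectangles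
`[-R, R] × [θ₁, θ₂]` identifies the two transforms: the right-hand sides vanish as `R → ∞` by the
decay of `e^{-ρt}`, the left-hand sides because `t φ(t) → 0`. In general, both transforms are
holomorphic in `ρ` on the intersection of the half-planes `Re (ρ e^{iθⱼ}) > γ θⱼ`, which is convex;
as `θ₂ - θ₁ < π` it contains a disc on which the first case applies, and the identity theorem
concludes.
-/

open Complex
open scoped Interval

section Rays

lemma rayPt_eq_mul (θ r : ℝ) : rayPt θ r = r * rayDir θ := rfl

lemma norm_rayDir (θ : ℝ) : ‖rayDir θ‖ = 1 := by
  simp [rayDir, norm_exp]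

lemma re_rayDir (θ : ℝ) : (rayDir θ).re = Real.cos θ := exp_ofReal_mul_I_re θ

lemma rayDir_mul_rayDir (θ θ' : ℝ) : rayDir θ * rayDir θ' = rayDir (θ + θ') := by
  simp only [rayDir, ← Complex.exp_add]
  push_cast
  ring_nf

lemma cexp_eq_rayPt (z : ℂ) : cexp z = rayPt z.im (rexp z.re) := by
  rw [rayPt, ofReal_exp, ← Complex.exp_add, re_add_im]

lemma cexp_ofReal_add_mul_I (x θ : ℝ) : cexp (x + θ * I) = rayPt θ (rexp x) := by
  rw [cexp_eq_rayPt]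
  simp

lemma neg_mul_rayPt (ρ : ℂ) (θ r : ℝ) : -ρ * rayPt θ r = -(ρ * rayDir θ * r) := by
  rw [rayPt_eq_mul]
  ring

lemma norm_cexp_neg_mul_ofReal (s : ℂ) (r : ℝ) : ‖cexp (-(s * r))‖ = rexp (-(s.re * r)) := by
  rw [norm_exp, neg_re, re_mul_ofReal]

lemma norm_rayPt (θ : ℝ) {r : ℝ} (hr : 0 ≤ r) : ‖rayPt θ r‖ = r := by
  rw [rayPt_eq_mul, norm_mul, norm_rayDir, mul_one, norm_real, Real.norm_of_nonneg hr]

lemma rayPt_mem_sectorIoo {a b θ r : ℝ} (hθ : θ ∈ Ioo a b) (hr : 0 < r) :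
    rayPt θ r ∈ sectorIoo a b :=
  ⟨r, θ, hr, hθ, rfl⟩

lemma rayPt_mem_sectorIcc {a b θ r : ℝ} (hθ : θ ∈ Icc a b) (hr : 0 < r) :
    rayPt θ r ∈ sectorIcc a b :=
  ⟨r, θ, hr, hθ, rfl⟩

lemma cexp_mem_sectorIcc {a b : ℝ} {z : ℂ} (hz : z.im ∈ Icc a b) : cexp z ∈ sectorIcc a b :=
  ⟨rexp z.re, z.im, Real.exp_pos _, hz, cexp_eq_rayPt z⟩

lemma sectorIoo_eq_image_cexp (a b : ℝ) : sectorIoo a b = cexp '' (im ⁻¹' Ioo a b) := by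
  ext t
  constructor
  · rintro ⟨r, θ, hr, hθ, rfl⟩
    refine ⟨Real.log r + θ * I, by simpa using hθ, ?_⟩
    rw [cexp_eq_rayPt]
    simp [Real.exp_log hr, rayPt]
  · rintro ⟨z, hz, rfl⟩
    exact ⟨rexp z.re, z.im, Real.exp_pos _, hz, cexp_eq_rayPt z⟩

lemma isOpen_sectorIoo (a b : ℝ) : IsOpen (sectorIoo a b) := by
  rw [sectorIoo_eq_image_cexp]
  exact isOpenMap_exp _ (isOpen_Ioo.preimage continuous_im)

lemma sectorIcc_subset_sectorIoo {a b a' b' : ℝ} (h : Icc a' b' ⊆ Ioo a b) :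
    sectorIcc a' b' ⊆ sectorIoo a b :=
  fun _ ⟨r, θ, hr, hθ, ht⟩ => ⟨r, θ, hr, h hθ, ht⟩

lemma continuousOn_comp_rayPt {φ : ℂ → ℂ} {θ : ℝ}
    (hφ : ∀ r, 0 < r → ContinuousAt φ (rayPt θ r)) :
    ContinuousOn (fun r : ℝ => φ (rayPt θ r)) (Ioi 0) :=
  fun r hr => ((hφ r hr).comp (by unfold rayPt; fun_prop)).continuousWithinAt

end Rays

noncomputable def laplace (f : ℝ → ℂ) (s : ℂ) : ℂ :=
  ∫ r in Ioi (0 : ℝ), f r * cexp (-(s * r))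

section Laplace

variable {f : ℝ → ℂ} {A b : ℝ}

lemma integrableOn_norm_mul_pow_mul_exp_neg_mul
    (hf : AEStronglyMeasurable f (volume.restrict (Ioi 0))) (hf₀ : IntegrableOn f (Ioc 0 1))
    (hfb : ∀ r, 1 < r → ‖f r‖ ≤ A * rexp (b * r)) {c : ℝ} (hbc : b < c) (n : ℕ) :
    IntegrableOn (fun r => ‖f r‖ * (r ^ n * rexp (-(c * r)))) (Ioi 0) := by
  have hmeas : AEStronglyMeasurable (fun r => ‖f r‖ * (r ^ n * rexp (-(c * r))))
      (volume.restrict (Ioi 0)) :=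
    hf.norm.mul (by fun_prop)
  rw [← Ioc_union_Ioi_eq_Ioi zero_le_one]
  refine IntegrableOn.union ?_ ?_
  · refine (hf₀.norm.mul_const (rexp |c|)).mono' (hmeas.mono_set Ioc_subset_Ioi_self) ?_
    filter_upwards [ae_restrict_mem measurableSet_Ioc] with r ⟨hr₀, hr₁⟩
    rw [Real.norm_of_nonneg (by positivity)]
    gcongr
    calc r ^ n * rexp (-(c * r)) ≤ 1 * rexp |c| := by
          gcongr
          · exact pow_le_one₀ hr₀.le hr₁
          · calc -(c * r) ≤ |c| * r := by nlinarith [neg_abs_le c]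
              _ ≤ |c| := mul_le_of_le_one_right (abs_nonneg c) hr₁
      _ = rexp |c| := one_mul _
  · have hdom : IntegrableOn (fun r : ℝ => A * (r ^ (n : ℝ) * rexp (-(c - b) * r ^ (1 : ℝ))))
        (Ioi 1) :=
      ((integrableOn_rpow_mul_exp_neg_mul_rpow (by linarith [n.cast_nonneg (α := ℝ)]) one_pos
        (sub_pos.2 hbc)).mono_set (Ioi_subset_Ioi zero_le_one)).const_mul A
    refine hdom.mono' (hmeas.mono_set (Ioi_subset_Ioi zero_le_one)) ?_
    filter_upwards [ae_restrict_mem measurableSet_Ioi] with r (hr : 1 < r)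
    have hr₀ : 0 < r := one_pos.trans hr
    rw [Real.norm_of_nonneg (by positivity), Real.rpow_natCast, Real.rpow_one]
    calc ‖f r‖ * (r ^ n * rexp (-(c * r)))
        ≤ A * rexp (b * r) * (r ^ n * rexp (-(c * r))) :=
          mul_le_mul_of_nonneg_right (hfb r hr) (by positivity)
      _ = A * (r ^ n * rexp (-(c - b) * r)) := by
          rw [show -(c - b) * r = b * r + -(c * r) by ring, Real.exp_add]
          ring

lemma integrableOn_laplace_integrand
    (hf : AEStronglyMeasurable f (volume.restrict (Ioi 0))) (hf₀ : IntegrableOn f (Ioc 0 1))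
    (hfb : ∀ r, 1 < r → ‖f r‖ ≤ A * rexp (b * r)) {s : ℂ} (hs : b < s.re) :
    IntegrableOn (fun r : ℝ => f r * cexp (-(s * r))) (Ioi 0) := by
  refine (integrableOn_norm_mul_pow_mul_exp_neg_mul hf hf₀ hfb hs 0).mono'
    (hf.mul (by fun_prop)) (Eventually.of_forall fun r => ?_)
  simp [norm_cexp_neg_mul_ofReal]

lemma differentiableAt_laplace
    (hf : AEStronglyMeasurable f (volume.restrict (Ioi 0))) (hf₀ : IntegrableOn f (Ioc 0 1))
    (hfb : ∀ r, 1 < r → ‖f r‖ ≤ A * rexp (b * r)) {s : ℂ} (hs : b < s.re) :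
    DifferentiableAt ℂ (laplace f) s := by
  set c := (b + s.re) / 2 with hc
  have hre : ∀ z ∈ Metric.ball s (s.re - c), c < z.re := fun z hz => by
    have h := abs_re_le_norm (z - s)
    rw [mem_ball_iff_norm] at hz
    rw [sub_re] at h
    linarith [neg_abs_le (z.re - s.re)]
  refine (hasDerivAt_integral_of_dominated_loc_of_deriv_le
    (F := fun z r => f r * cexp (-(z * r)))
    (F' := fun z r => f r * (cexp (-(z * r)) * -r))
    (bound := fun r => ‖f r‖ * (r ^ 1 * rexp (-(c * r))))
    (Metric.ball_mem_nhds s (ε := s.re - c) (by linarith [hc]))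
    (Eventually.of_forall fun z => hf.mul (by fun_prop))
    (integrableOn_laplace_integrand hf hf₀ hfb hs) (hf.mul (by fun_prop)) ?_
    (integrableOn_norm_mul_pow_mul_exp_neg_mul hf hf₀ hfb (by linarith [hc]) 1)
    ?_).2.differentiableAt
  · filter_upwards [ae_restrict_mem measurableSet_Ioi] with r (hr : 0 < r) z hz
    rw [norm_mul, norm_mul, norm_cexp_neg_mul_ofReal, norm_neg, norm_real,
      Real.norm_of_nonneg hr.le, pow_one, mul_comm (rexp _)]
    gcongr
    nlinarith [hre z hz]
  · filter_upwards with r z _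
    simpa using ((hasDerivAt_id z).mul_const (r : ℂ)).neg.cexp.const_mul (f r)

end Laplace

section Strip

variable {E : Type*} [NormedAddCommGroup E]

lemma integral_exp_smul_comp_exp [NormedSpace ℝ E] (g : ℝ → E) :
    ∫ x, rexp x • g (rexp x) = ∫ y in Ioi 0, g y := by
  have := integral_image_eq_integral_abs_deriv_smul MeasurableSet.univ
    (fun x _ => (Real.hasDerivAt_exp x).hasDerivWithinAt) Real.exp_injective.injOn g
  simpa [Real.range_exp] using this.symm

lemma integrable_exp_smul_comp_exp_iff [NormedSpace ℝ E] (g : ℝ → E) :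
    Integrable (fun x => rexp x • g (rexp x)) ↔ IntegrableOn g (Ioi 0) := by
  have := integrableOn_image_iff_integrableOn_abs_deriv_smul MeasurableSet.univ
    (fun x _ => (Real.hasDerivAt_exp x).hasDerivWithinAt) Real.exp_injective.injOn g
  simpa [Real.range_exp] using this.symm

lemma tendsto_integral_vertical_zero [NormedSpace ℝ E] {F : ℂ → E} {y₁ y₂ : ℝ} {l : Filter ℝ}
    (hF : Tendsto F (comap re l ⊓ 𝓟 (im ⁻¹' [[y₁, y₂]])) (𝓝 0)) :
    Tendsto (fun x : ℝ => ∫ y in y₁..y₂, F (x + y * I)) l (𝓝 0) := by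
  rw [Metric.tendsto_nhds] at hF ⊢
  intro ε hε
  have hε' : 0 < ε / (|y₂ - y₁| + 1) := by positivity
  have hsmall := hF _ hε'
  rw [eventually_inf_principal, eventually_comap] at hsmall
  filter_upwards [hsmall] with x hx
  have hbound : ∀ y ∈ Ι y₁ y₂, ‖F (x + y * I)‖ ≤ ε / (|y₂ - y₁| + 1) := fun y hy => by
    simpa using (hx (x + y * I) (by simp) (by simpa using uIoc_subset_uIcc hy)).le
  rw [dist_zero_right]
  calc ‖∫ y in y₁..y₂, F (x + y * I)‖ ≤ ε / (|y₂ - y₁| + 1) * |y₂ - y₁| :=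
        intervalIntegral.norm_integral_le_of_norm_le_const hbound
    _ < ε := by
        rw [div_mul_eq_mul_div, div_lt_iff₀ (by positivity)]
        nlinarith

theorem integral_add_mul_I_eq_of_tendsto_zero [NormedSpace ℂ E] [CompleteSpace E] {F : ℂ → E}
    {y₁ y₂ : ℝ} (hF : DifferentiableOn ℂ F (im ⁻¹' [[y₁, y₂]]))
    (h₁ : Integrable fun x : ℝ => F (x + y₁ * I)) (h₂ : Integrable fun x : ℝ => F (x + y₂ * I))
    (hbot : Tendsto F (comap re atBot ⊓ 𝓟 (im ⁻¹' [[y₁, y₂]])) (𝓝 0))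
    (htop : Tendsto F (comap re atTop ⊓ 𝓟 (im ⁻¹' [[y₁, y₂]])) (𝓝 0)) :
    ∫ x : ℝ, F (x + y₁ * I) = ∫ x : ℝ, F (x + y₂ * I) := by
  have hrect : ∀ R : ℝ, (∫ x in -R..R, F (x + y₁ * I)) - (∫ x in -R..R, F (x + y₂ * I)) +
      I • (∫ y in y₁..y₂, F (R + y * I)) - I • (∫ y in y₁..y₂, F ((-R : ℝ) + y * I)) = 0 :=
    fun R => by
      simpa using integral_boundary_rect_eq_zero_of_differentiableOn F (-R + y₁ * I)
        (R + y₂ * I) (hF.mono fun z hz => by simpa using hz.2)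
  have hlim := (((intervalIntegral_tendsto_integral h₁ tendsto_neg_atTop_atBot tendsto_id).sub
    (intervalIntegral_tendsto_integral h₂ tendsto_neg_atTop_atBot tendsto_id)).add
    ((tendsto_integral_vertical_zero htop).const_smul I)).sub
    (((tendsto_integral_vertical_zero hbot).comp tendsto_neg_atTop_atBot).const_smul I)
  rw [smul_zero, add_zero, sub_zero] at hlim
  refine sub_eq_zero.1 (tendsto_nhds_unique hlim (tendsto_const_nhds.congr fun R => ?_))
  simpa only [Function.comp_apply, id] using (hrect R).symm

end Strip

-- `L^θ(φ)(ρ)`, with the ray parametrised by `t = r e^{iθ}`.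
noncomputable def rayLaplace (φ : ℂ → ℂ) (θ : ℝ) (ρ : ℂ) : ℂ :=
  ∫ r in Ioi (0 : ℝ), φ (rayPt θ r) * cexp (-ρ * rayPt θ r) * rayDir θ

section RayLaplace

variable {φ : ℂ → ℂ} {A b : ℝ} {ρ : ℂ}

lemma rayLaplace_eq_laplace (φ : ℂ → ℂ) (θ : ℝ) (ρ : ℂ) :
    rayLaplace φ θ ρ = laplace (fun r => φ (rayPt θ r)) (ρ * rayDir θ) * rayDir θ := by
  simp_rw [rayLaplace, laplace, neg_mul_rayPt, integral_mul_const]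

lemma integrableOn_rayLaplace_integrand {θ : ℝ} (hφ : ∀ r, 0 < r → ContinuousAt φ (rayPt θ r))
    (hint : IntegrableOn (fun r => φ (rayPt θ r)) (Ioc 0 1))
    (hbound : ∀ r, 0 < r → ‖φ (rayPt θ r)‖ ≤ A * rexp (b * r)) (hρ : b < (ρ * rayDir θ).re) :
    IntegrableOn (fun r => φ (rayPt θ r) * cexp (-ρ * rayPt θ r) * rayDir θ) (Ioi 0) := by
  simp_rw [neg_mul_rayPt]
  exact (integrableOn_laplace_integrand
    ((continuousOn_comp_rayPt hφ).aestronglyMeasurable measurableSet_Ioi) hint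
    (fun r hr => hbound r (one_pos.trans hr)) hρ).mul_const _

lemma differentiableOn_rayLaplace {θ : ℝ} (hφ : ∀ r, 0 < r → ContinuousAt φ (rayPt θ r))
    (hint : IntegrableOn (fun r => φ (rayPt θ r)) (Ioc 0 1))
    (hbound : ∀ ε, 0 < ε → ∀ r, 0 < r → ‖φ (rayPt θ r)‖ ≤ A * rexp ((b + ε) * r)) :
    DifferentiableOn ℂ (rayLaplace φ θ) {s | b < (s * rayDir θ).re} := by
  intro ρ (hρ : b < (ρ * rayDir θ).re)
  set ε := ((ρ * rayDir θ).re - b) / 2 with hε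
  have hlaplace := differentiableAt_laplace
    ((continuousOn_comp_rayPt hφ).aestronglyMeasurable measurableSet_Ioi) hint
    (fun r hr => hbound ε (by linarith) r (one_pos.trans hr)) (s := ρ * rayDir θ) (by linarith)
  rw [funext (rayLaplace_eq_laplace φ θ)]
  exact ((hlaplace.comp ρ (by fun_prop : DifferentiableAt ℂ (· * rayDir θ) ρ)).mul_const
    _).differentiableWithinAt

noncomputable def stripIntegrand (φ : ℂ → ℂ) (ρ z : ℂ) : ℂ :=
  φ (cexp z) * cexp (-ρ * cexp z) * cexp z

lemma stripIntegrand_ofReal_add_mul_I (φ : ℂ → ℂ) (ρ : ℂ) (θ x : ℝ) :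
    stripIntegrand φ ρ (x + θ * I) =
      rexp x • (φ (rayPt θ (rexp x)) * cexp (-ρ * rayPt θ (rexp x)) * rayDir θ) := by
  simp only [stripIntegrand, cexp_ofReal_add_mul_I, real_smul]
  rw [rayPt_eq_mul θ (rexp x)]
  ring

lemma integral_stripIntegrand (φ : ℂ → ℂ) (ρ : ℂ) (θ : ℝ) :
    ∫ x : ℝ, stripIntegrand φ ρ (x + θ * I) = rayLaplace φ θ ρ := by
  simp_rw [stripIntegrand_ofReal_add_mul_I]
  exact integral_exp_smul_comp_exp (fun r => φ (rayPt θ r) * cexp (-ρ * rayPt θ r) * rayDir θ)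

lemma integrable_stripIntegrand_iff (φ : ℂ → ℂ) (ρ : ℂ) (θ : ℝ) :
    Integrable (fun x : ℝ => stripIntegrand φ ρ (x + θ * I)) ↔
      IntegrableOn (fun r => φ (rayPt θ r) * cexp (-ρ * rayPt θ r) * rayDir θ) (Ioi 0) := by
  simp_rw [stripIntegrand_ofReal_add_mul_I]
  exact integrable_exp_smul_comp_exp_iff
    (fun r => φ (rayPt θ r) * cexp (-ρ * rayPt θ r) * rayDir θ)

lemma norm_stripIntegrand (φ : ℂ → ℂ) (ρ z : ℂ) :
    ‖stripIntegrand φ ρ z‖ = ‖φ (rayPt z.im (rexp z.re))‖ *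
      rexp (-((ρ * rayDir z.im).re * rexp z.re)) * rexp z.re := by
  rw [stripIntegrand, cexp_eq_rayPt z, norm_mul, norm_mul, neg_mul_rayPt,
    norm_cexp_neg_mul_ofReal, norm_rayPt _ (Real.exp_pos z.re).le]

lemma tendsto_stripIntegrand_atBot {θ₁ θ₂ : ℝ}
    (hzero : Tendsto (fun t => t * φ t) (𝓝[sectorIcc θ₁ θ₂] 0) (𝓝 0)) :
    Tendsto (stripIntegrand φ ρ) (comap re atBot ⊓ 𝓟 (im ⁻¹' Icc θ₁ θ₂)) (𝓝 0) := by
  have hexp : Tendsto cexp (comap re atBot ⊓ 𝓟 (im ⁻¹' Icc θ₁ θ₂)) (𝓝[sectorIcc θ₁ θ₂] 0) :=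
    tendsto_nhdsWithin_iff.2 ⟨tendsto_exp_comap_re_atBot.mono_left inf_le_left,
      eventually_inf_principal.2 (Eventually.of_forall fun z hz => cexp_mem_sectorIcc hz)⟩
  have hcont : Tendsto (fun t => cexp (-ρ * t)) (𝓝 0) (𝓝 1) := by
    simpa using (by fun_prop : Continuous fun t => cexp (-ρ * t)).tendsto 0
  have h := (hzero.comp hexp).mul (hcont.comp (hexp.mono_right nhdsWithin_le_nhds))
  rw [zero_mul] at h
  refine h.congr fun z => ?_
  simp only [stripIntegrand, Function.comp_apply]
  ring

lemma tendsto_stripIntegrand_atTop {θ₁ θ₂ : ℝ} (h12 : θ₁ ≤ θ₂)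
    (hbound : ∀ θ ∈ Icc θ₁ θ₂, ∀ r, 0 < r → ‖φ (rayPt θ r)‖ ≤ A * rexp (b * r))
    (hρ : ∀ θ ∈ Icc θ₁ θ₂, b < (ρ * rayDir θ).re) :
    Tendsto (stripIntegrand φ ρ) (comap re atTop ⊓ 𝓟 (im ⁻¹' Icc θ₁ θ₂)) (𝓝 0) := by
  obtain ⟨c, hbc, hc⟩ : ∃ c, b < c ∧ ∀ θ ∈ Icc θ₁ θ₂, c ≤ (ρ * rayDir θ).re := by
    obtain ⟨θ₀, hθ₀, hmin⟩ := isCompact_Icc.exists_isMinOn (nonempty_Icc.2 h12)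
      (f := fun θ => (ρ * rayDir θ).re) (by unfold rayDir; fun_prop)
    exact ⟨_, hρ θ₀ hθ₀, hmin⟩
  have hdecay : Tendsto (fun x : ℝ => A * (rexp x * rexp (-(c - b) * rexp x))) atTop (𝓝 0) := by
    have := (tendsto_rpow_mul_exp_neg_mul_atTop_nhds_zero 1 (c - b) (sub_pos.2 hbc)).comp
      Real.tendsto_exp_atTop
    simpa using this.const_mul A
  refine squeeze_zero_norm' ?_ (hdecay.comp (tendsto_comap.mono_left inf_le_left))
  refine eventually_inf_principal.2 (Eventually.of_forall fun z (hz : z.im ∈ Icc θ₁ θ₂) => ?_)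
  have hφz := hbound _ hz _ (Real.exp_pos z.re)
  calc ‖stripIntegrand φ ρ z‖
      = ‖φ (rayPt z.im (rexp z.re))‖ * rexp (-((ρ * rayDir z.im).re * rexp z.re)) * rexp z.re :=
        norm_stripIntegrand φ ρ z
    _ ≤ A * rexp (b * rexp z.re) * rexp (-(c * rexp z.re)) * rexp z.re := by
        gcongr
        · exact (norm_nonneg _).trans hφz
        · exact hc _ hz
    _ = A * (rexp z.re * rexp (-(c - b) * rexp z.re)) := by
        rw [show -(c - b) * rexp z.re = b * rexp z.re + -(c * rexp z.re) by ring, Real.exp_add]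
        ring

theorem rayLaplace_eq_of_forall_lt {θ₁ θ₂ : ℝ} (h12 : θ₁ ≤ θ₂)
    (hφ : ∀ t ∈ sectorIcc θ₁ θ₂, DifferentiableAt ℂ φ t)
    (hint₁ : IntegrableOn (fun r => φ (rayPt θ₁ r)) (Ioc 0 1))
    (hint₂ : IntegrableOn (fun r => φ (rayPt θ₂ r)) (Ioc 0 1))
    (hbound : ∀ θ ∈ Icc θ₁ θ₂, ∀ r, 0 < r → ‖φ (rayPt θ r)‖ ≤ A * rexp (b * r))
    (hzero : Tendsto (fun t => t * φ t) (𝓝[sectorIcc θ₁ θ₂] 0) (𝓝 0))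
    (hρ : ∀ θ ∈ Icc θ₁ θ₂, b < (ρ * rayDir θ).re) :
    rayLaplace φ θ₁ ρ = rayLaplace φ θ₂ ρ := by
  have hline : ∀ θ ∈ Icc θ₁ θ₂, IntegrableOn (fun r => φ (rayPt θ r)) (Ioc 0 1) →
      Integrable fun x : ℝ => stripIntegrand φ ρ (x + θ * I) := fun θ hθ hint =>
    (integrable_stripIntegrand_iff φ ρ θ).2 (integrableOn_rayLaplace_integrand
      (fun r hr => (hφ _ (rayPt_mem_sectorIcc hθ hr)).continuousAt) hint (hbound θ hθ) (hρ θ hθ))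
  have hdiff : DifferentiableOn ℂ (stripIntegrand φ ρ) (im ⁻¹' Icc θ₁ θ₂) := fun z hz =>
    have hφz : DifferentiableAt ℂ (fun z => φ (cexp z)) z :=
      (hφ _ (cexp_mem_sectorIcc hz)).comp z differentiableAt_exp
    ((hφz.mul (by fun_prop)).mul differentiableAt_exp).differentiableWithinAt
  rw [← integral_stripIntegrand, ← integral_stripIntegrand]
  refine integral_add_mul_I_eq_of_tendsto_zero ?_ (hline θ₁ (left_mem_Icc.2 h12) hint₁)
    (hline θ₂ (right_mem_Icc.2 h12) hint₂) ?_ ?_ <;> rw [uIcc_of_le h12]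
  exacts [hdiff, tendsto_stripIntegrand_atBot hzero, tendsto_stripIntegrand_atTop h12 hbound hρ]

end RayLaplace

lemma exists_ball_forall_lt_re_mul_rayDir {θ₁ θ₂ : ℝ} (h : θ₂ - θ₁ < π) (M : ℝ) :
    ∃ s₀ : ℂ, ∀ s ∈ Metric.ball s₀ 1, ∀ θ ∈ Icc θ₁ θ₂, M < (s * rayDir θ).re := by
  set κ := Real.cos ((θ₂ - θ₁) / 2)
  set m := (θ₁ + θ₂) / 2 with hm
  set T := (|M| + 1) / κ
  refine ⟨T * rayDir (-m), fun s hs θ hθ => ?_⟩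
  have h12 : θ₁ ≤ θ₂ := hθ.1.trans hθ.2
  have hκ : 0 < κ := Real.cos_pos_of_mem_Ioo ⟨by linarith [Real.pi_pos], by linarith⟩
  have hcos : κ ≤ Real.cos (θ - m) := by
    rw [← Real.cos_abs (θ - m)]
    exact Real.cos_le_cos_of_nonneg_of_le_pi (abs_nonneg _) (by linarith [Real.pi_pos])
      (abs_le.2 ⟨by linarith [hθ.1, hm], by linarith [hθ.2, hm]⟩)
  have hcenter : (T * rayDir (-m) * rayDir θ).re = T * Real.cos (θ - m) := by
    rw [mul_assoc, rayDir_mul_rayDir, re_ofReal_mul, re_rayDir, neg_add_eq_sub]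
  have hdev : |((s - T * rayDir (-m)) * rayDir θ).re| < 1 := by
    refine (abs_re_le_norm _).trans_lt ?_
    rwa [norm_mul, norm_rayDir, mul_one, ← dist_eq_norm]
  have hTκ : T * κ = |M| + 1 := div_mul_cancel₀ _ hκ.ne'
  have hs : (s * rayDir θ).re = T * Real.cos (θ - m) + ((s - T * rayDir (-m)) * rayDir θ).re := by
    rw [← hcenter, ← add_re]
    ring_nf
  have hT : 0 ≤ T := by positivity
  nlinarith [abs_lt.1 hdev, le_abs_self M, mul_le_mul_of_nonneg_left hcos hT]

lemma isOpen_setOf_lt_re_mul (c : ℝ) (w : ℂ) : IsOpen {s : ℂ | c < (s * w).re} :=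
  isOpen_lt continuous_const (by fun_prop)

lemma convex_setOf_lt_re_mul (c : ℝ) (w : ℂ) : Convex ℝ {s : ℂ | c < (s * w).re} :=
  convex_halfSpace_gt ⟨fun x y => by simp [add_mul], fun r x => by simp [mul_assoc]⟩ c

theorem stmt_7_general (a b : ℝ) (hlen : b - a < π)
    (γ α : ℝ → ℝ)
    (hγloc : ∀ K : Set ℝ, K ⊆ Set.Ioo a b → IsCompact K → ∃ M : ℝ, ∀ θ ∈ K, |γ θ| ≤ M)
    (hαloc : ∀ K : Set ℝ, K ⊆ Set.Ioo a b → IsCompact K → ∃ M : ℝ, ∀ θ ∈ K, |α θ| ≤ M)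
    (φ : ℂ → ℂ)
    (hhol : DifferentiableOn ℂ φ (sectorIoo a b))
    (hbound : ∀ ε : ℝ, 0 < ε → ∀ r : ℝ, 0 < r → ∀ θ ∈ Set.Ioo a b,
      ‖φ (rayPt θ r)‖ ≤ α θ * Real.exp ((γ θ + ε) * r))
    (hint : ∀ θ ∈ Set.Ioo a b,
      IntegrableOn (fun r : ℝ => φ (rayPt θ r)) (Set.Ioc 0 1))
    (hzero : ∀ a' b' : ℝ, a < a' → a' ≤ b' → b' < b →
      Tendsto (fun t : ℂ => t * φ t) (𝓝[sectorIcc a' b'] 0) (𝓝 0)) :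
    ∀ θ₁ ∈ Set.Ioo a b, ∀ θ₂ ∈ Set.Ioo a b, ∀ ρ : ℂ,
      γ θ₁ < (ρ * rayDir θ₁).re → γ θ₂ < (ρ * rayDir θ₂).re →
      (∫ r in Set.Ioi (0 : ℝ),
          φ (rayPt θ₁ r) * Complex.exp (-ρ * rayPt θ₁ r) * rayDir θ₁)
        = ∫ r in Set.Ioi (0 : ℝ),
            φ (rayPt θ₂ r) * Complex.exp (-ρ * rayPt θ₂ r) * rayDir θ₂ := by
  intro θ₁ hθ₁ θ₂ hθ₂ ρ h₁ h₂
  wlog h12 : θ₁ ≤ θ₂ generalizing θ₁ θ₂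
  · exact (this θ₂ hθ₂ θ₁ hθ₁ h₂ h₁ (le_of_not_ge h12)).symm
  change rayLaplace φ θ₁ ρ = rayLaplace φ θ₂ ρ
  have hφ : ∀ t ∈ sectorIoo a b, DifferentiableAt ℂ φ t :=
    fun t ht => hhol.differentiableAt ((isOpen_sectorIoo a b).mem_nhds ht)
  have hK : Icc θ₁ θ₂ ⊆ Ioo a b := Icc_subset_Ioo hθ₁.1 hθ₂.2
  obtain ⟨Mγ, hMγ⟩ := hγloc _ hK isCompact_Icc
  obtain ⟨Mα, hMα⟩ := hαloc _ hK isCompact_Icc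
  have hunif : ∀ θ ∈ Icc θ₁ θ₂, ∀ r, 0 < r → ‖φ (rayPt θ r)‖ ≤ Mα * rexp ((Mγ + 1) * r) :=
    fun θ hθ r hr => (hbound 1 one_pos r hr θ (hK hθ)).trans <|
      mul_le_mul ((le_abs_self _).trans (hMα θ hθ))
        (Real.exp_le_exp.2 (by nlinarith [(abs_le.1 (hMγ θ hθ)).2])) (Real.exp_pos _).le
        ((abs_nonneg _).trans (hMα θ hθ))
  have hdiff : ∀ θ ∈ Ioo a b, DifferentiableOn ℂ (rayLaplace φ θ) {s | γ θ < (s * rayDir θ).re} :=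
    fun θ hθ => differentiableOn_rayLaplace
      (fun r hr => (hφ _ (rayPt_mem_sectorIoo hθ hr)).continuousAt) (hint θ hθ)
      (fun ε hε r hr => hbound ε hε r hr θ hθ)
  have hU := (isOpen_setOf_lt_re_mul (γ θ₁) (rayDir θ₁)).inter
    (isOpen_setOf_lt_re_mul (γ θ₂) (rayDir θ₂))
  obtain ⟨s₀, hs₀⟩ :=
    exists_ball_forall_lt_re_mul_rayDir (θ₁ := θ₁) (θ₂ := θ₂) (by linarith [hθ₁.1, hθ₂.2]) (Mγ + 1)
  refine AnalyticOnNhd.eqOn_of_preconnected_of_eventuallyEq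
    (((hdiff θ₁ hθ₁).mono inter_subset_left).analyticOnNhd hU)
    (((hdiff θ₂ hθ₂).mono inter_subset_right).analyticOnNhd hU)
    ((convex_setOf_lt_re_mul _ _).inter (convex_setOf_lt_re_mul _ _)).isPreconnected
    (z₀ := s₀) ?_ ?_ ⟨h₁, h₂⟩
  · have hγ : ∀ θ ∈ Icc θ₁ θ₂, γ θ < (s₀ * rayDir θ).re := fun θ hθ => by
      linarith [(abs_le.1 (hMγ θ hθ)).2, hs₀ s₀ (Metric.mem_ball_self one_pos) θ hθ]
    exact ⟨hγ θ₁ (left_mem_Icc.2 h12), hγ θ₂ (right_mem_Icc.2 h12)⟩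
  · filter_upwards [Metric.ball_mem_nhds s₀ one_pos] with s hs
    exact rayLaplace_eq_of_forall_lt h12 (fun t ht => hφ t (sectorIcc_subset_sectorIoo hK ht))
      (hint θ₁ hθ₁) (hint θ₂ hθ₂) hunif (hzero θ₁ θ₂ hθ₁.1 h12 hθ₂.2) (hs₀ s hs)

/-- Direction-independence of the Laplace transform: for `φ` holomorphic
on the sector `S` of directions in an open interval `I = (a, b)` of length `< π`,
satisfying the exponential bound (a), ray-integrability near the origin (b), and
`t φ(t) → 0` as `t → 0` within closed subsectors (c), the Laplace transforms along any
two directions `θ₁, θ₂ ∈ I` agree at every `ρ` with `Re(ρ e^{iθ₁}) > γ(θ₁)` and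
`Re(ρ e^{iθ₂}) > γ(θ₂)`. -/
theorem stmt_7 (a b : ℝ) (hab : a < b) (hlen : b - a < π)
    (γ α : ℝ → ℝ)
    (hγloc : ∀ K : Set ℝ, K ⊆ Set.Ioo a b → IsCompact K → ∃ M : ℝ, ∀ θ ∈ K, |γ θ| ≤ M)
    (hαloc : ∀ K : Set ℝ, K ⊆ Set.Ioo a b → IsCompact K → ∃ M : ℝ, ∀ θ ∈ K, |α θ| ≤ M)
    (hαpos : ∀ θ ∈ Set.Ioo a b, 0 < α θ)
    (φ : ℂ → ℂ)
    (hhol : DifferentiableOn ℂ φ (sectorIoo a b))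
    (hbound : ∀ ε : ℝ, 0 < ε → ∀ r : ℝ, 0 < r → ∀ θ ∈ Set.Ioo a b,
      ‖φ (rayPt θ r)‖ ≤ α θ * Real.exp ((γ θ + ε) * r))
    (hint : ∀ θ ∈ Set.Ioo a b,
      IntegrableOn (fun r : ℝ => φ (rayPt θ r)) (Set.Ioc 0 1))
    (hzero : ∀ a' b' : ℝ, a < a' → a' ≤ b' → b' < b →
      Tendsto (fun t : ℂ => t * φ t) (𝓝[sectorIcc a' b'] 0) (𝓝 0)) :
    ∀ θ₁ ∈ Set.Ioo a b, ∀ θ₂ ∈ Set.Ioo a b, ∀ ρ : ℂ,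
      γ θ₁ < (ρ * rayDir θ₁).re → γ θ₂ < (ρ * rayDir θ₂).re →
      (∫ r in Set.Ioi (0 : ℝ),
          φ (rayPt θ₁ r) * Complex.exp (-ρ * rayPt θ₁ r) * rayDir θ₁)
        = ∫ r in Set.Ioi (0 : ℝ),
            φ (rayPt θ₂ r) * Complex.exp (-ρ * rayPt θ₂ r) * rayDir θ₂ :=
  stmt_7_general a b hlen γ α hγloc hαloc φ hhol hbound hint hzero
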